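/- Let 𝒫 be the set of finite words y = y₃⋯y_k (k ≥ 3) over {R, L} with y₃ = R and no two consecutive L's, and for y ∈ 𝒫 let q(Ry) := g_k/g_{k−1}, where g₁ = g₂ = 1 and g_i = g_{i−1} + g_{i−2} or g_{i−1} − g_{i−2} according to whether y_i = R or L. Let s be a word that is a concatenation of r pieces, each piece being RL or R (r ≥ 0, the empty word allowed), and let Q_s := { q(Ry) : y ∈ 𝒫 and s is a suffix of y }. Then the closure of Q_s in [0,∞] is a Stern-Brocot interval of rank r; moreover, if r is even then the closure of Q_{RLs} is the left sub-interval of rank r+1 of the closure of Q_s and the closure of Q_{Rs} is its right sub-interval, while if r is odd the roles of left and right are exchanged. -/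

import Mathlib

open Set ENNReal

noncomputable section

/-- Endpoints (as pairs of nonnegative integers, `(a,b)` representing `a/b`, with `1/0 = ∞`)
of the Stern-Brocot interval obtained from `[0/1, 1/0]` by following the list of choices `w`
(`true` = left sub-interval, `false` = right sub-interval). -/
def sbGo : (ℕ × ℕ) × (ℕ × ℕ) → List Bool → (ℕ × ℕ) × (ℕ × ℕ)
  | I, [] => I
  | ((a, b), (c, d)), (lft :: w) =>
      if lft then sbGo ((a, b), (a + c, b + d)) w else sbGo ((a + c, b + d), (c, d)) w

/-- The Stern-Brocot interval of rank `w.length` indexed by the list of choices `w`. -/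
def sb (w : List Bool) : (ℕ × ℕ) × (ℕ × ℕ) := sbGo ((0, 1), (1, 0)) w

/-- A Stern-Brocot interval, as a closed interval of the extended half-line `[0,∞]`. -/
def sbSetE : (ℕ × ℕ) × (ℕ × ℕ) → Set ℝ≥0∞
  | ((a, b), (c, d)) => Set.Icc ((a : ℝ≥0∞) / (b : ℝ≥0∞)) ((c : ℝ≥0∞) / (d : ℝ≥0∞))

/-- Labels along a path: `true` = `R` (addition), `false` = `L` (subtraction). -/
def gPair : ℤ × ℤ → List Bool → ℤ × ℤ
  | p, [] => p
  | (a, b), (c :: l) => gPair (b, if c then b + a else b - a) l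

/-- The word spelled by a list of pieces, each piece being `R` (`true`) or `RL` (`false`). -/
def piecesToWord : List Bool → List Bool
  | [] => []
  | true :: ps => true :: piecesToWord ps
  | false :: ps => true :: false :: piecesToWord ps

/-- The set `𝒫`: words `y = y₃⋯y_k` with `y₃ = R` and no two consecutive `L`'s. -/
def IsPathWord (y : List Bool) : Prop :=
  y.head? = some true ∧ y.Chain' fun a b => a = true ∨ b = true

/-- `q(Ry) = g_k / g_{k-1}`, as an element of `[0,∞]`. -/
def qval (y : List Bool) : ℝ≥0∞ :=
  ENNReal.ofReal (((gPair (1, 1) y).2 : ℝ) / ((gPair (1, 1) y).1 : ℝ))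

/-- The set `Q_s = { q(Ry) : y ∈ 𝒫, s is a suffix of y }`, as a subset of `[0,∞]`. -/
def Qset (s : List Bool) : Set ℝ≥0∞ :=
  {q | ∃ y : List Bool, IsPathWord y ∧ s <:+ y ∧ qval y = q}

/- ### auxiliary definitions -/

/-- index word of the Stern-Brocot interval for a list of pieces -/
def W : List Bool → List Bool
  | [] => []
  | p :: ps => W ps ++ [if Even ps.length then !p else p]

/-- action of a list of pieces on pairs of naturals -/
def act : List Bool → ℕ × ℕ → ℕ × ℕ
  | [], v => v
  | true :: ps, (a, b) => act ps (b, a + b)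
  | false :: ps, (a, b) => act ps (a + b, a)

lemma W_length (ps : List Bool) : (W ps).length = ps.length := by
  induction ps with
  | nil => rfl
  | cons p ps ih => simp [W, ih]

lemma sbGo_append (w w' : List Bool) : ∀ I, sbGo I (w ++ w') = sbGo (sbGo I w) w' := by
  induction w with
  | nil => intro I; rfl
  | cons p w ih =>
      rintro ⟨⟨a, b⟩, c, d⟩
      cases p <;> simp [sbGo, ih]

lemma sb_cons (p : Bool) (l : List Bool) :
    sb (W (p :: l)) = sbGo (sb (W l)) [if Even l.length then !p else p] := by
  simp [W, sb, sbGo_append]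

lemma act_pos (ps : List Bool) : ∀ a b : ℕ, 1 ≤ a → 1 ≤ b →
    1 ≤ (act ps (a, b)).1 ∧ 1 ≤ (act ps (a, b)).2 := by
  induction ps with
  | nil => intro a b ha hb; exact ⟨ha, hb⟩
  | cons p ps ih =>
      intro a b ha hb
      cases p
      · exact ih (a + b) a (by omega) ha
      · exact ih b (a + b) hb (by omega)

lemma act_cons_t1 (ps : List Bool) : act (true :: ps) (1,0) = act ps (0,1) := rfl
lemma act_cons_t2 (ps : List Bool) : act (true :: ps) (0,1) = act ps (1,1) := rfl
lemma act_cons_f1 (ps : List Bool) : act (false :: ps) (1,0) = act ps (1,1) := rfl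
lemma act_cons_f2 (ps : List Bool) : act (false :: ps) (0,1) = act ps (1,0) := rfl

lemma act_linear (ps : List Bool) : ∀ a b : ℕ,
    act ps (a, b) = (a * (act ps (1, 0)).1 + b * (act ps (0, 1)).1,
                     a * (act ps (1, 0)).2 + b * (act ps (0, 1)).2) := by
  induction ps with
  | nil => intro a b; simp [act]
  | cons p ps ih =>
      intro a b
      cases p
      · show act ps (a + b, a) = _
        rw [ih (a + b) a, act_cons_f1, act_cons_f2, ih 1 1]
        simp [Prod.ext_iff]; constructor <;> ring
      · show act ps (b, a + b) = _
        rw [ih b (a + b), act_cons_t1, act_cons_t2, ih 1 1]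
        simp [Prod.ext_iff]; constructor <;> ring

lemma act_one_one (ps : List Bool) :
    act ps (1, 1) = ((act ps (1,0)).1 + (act ps (0,1)).1, (act ps (1,0)).2 + (act ps (0,1)).2) := by
  rw [act_linear ps 1 1]; simp

lemma act_det (ps : List Bool) :
    (if Even ps.length then
      (act ps (1,0)).1 * (act ps (0,1)).2 = (act ps (1,0)).2 * (act ps (0,1)).1 + 1
    else
      (act ps (1,0)).2 * (act ps (0,1)).1 = (act ps (1,0)).1 * (act ps (0,1)).2 + 1) := by
  induction ps with
  | nil => simp [act]
  | cons p ps ih =>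
      cases p
      · rw [act_cons_f1, act_cons_f2, act_one_one]
        simp only [List.length_cons, Nat.even_add_one]
        by_cases h : Even ps.length <;> simp only [h, if_true, if_false, not_true,
          not_false_iff, ite_true, ite_false] at ih ⊢ <;> nlinarith [ih]
      · rw [act_cons_t1, act_cons_t2, act_one_one]
        simp only [List.length_cons, Nat.even_add_one]
        by_cases h : Even ps.length <;> simp only [h, if_true, if_false, not_true,
          not_false_iff, ite_true, ite_false] at ih ⊢ <;> nlinarith [ih]

lemma sbW (ps : List Bool) :
    sb (W ps) = if Even ps.length then
      (((act ps (1,0)).2, (act ps (1,0)).1), ((act ps (0,1)).2, (act ps (0,1)).1))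
    else
      (((act ps (0,1)).2, (act ps (0,1)).1), ((act ps (1,0)).2, (act ps (1,0)).1)) := by
  induction ps with
  | nil => simp [sb, W, sbGo, act]
  | cons p ps ih =>
      rw [sb_cons, ih]
      cases p
      · rw [act_cons_f1, act_cons_f2, act_one_one]
        simp only [List.length_cons, Nat.even_add_one]
        split_ifs with h1 h2 h2 <;> try tauto
        all_goals simp_all [sbGo, Prod.ext_iff, Nat.add_comm]
      · rw [act_cons_t1, act_cons_t2, act_one_one]
        simp only [List.length_cons, Nat.even_add_one]
        split_ifs with h1 h2 h2 <;> try tauto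
        all_goals simp_all [sbGo, Prod.ext_iff, Nat.add_comm]

lemma sbSetE_def (M : (ℕ × ℕ) × (ℕ × ℕ)) :
    sbSetE M = Set.Icc ((M.1.1 : ℝ≥0∞) / (M.1.2 : ℝ≥0∞)) ((M.2.1 : ℝ≥0∞) / (M.2.2 : ℝ≥0∞)) := by
  rcases M with ⟨⟨a, b⟩, c, d⟩; rfl

lemma divLe (x y z w : ℕ) (hy : 0 < y) (hzw : 0 < z ∨ 0 < w) (h : x * w ≤ z * y) :
    (x : ℝ≥0∞) / y ≤ (z : ℝ≥0∞) / w := by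
  rcases Nat.eq_zero_or_pos w with hw | hw
  · subst hw
    have hz : 0 < z := by omega
    rw [Nat.cast_zero, ENNReal.div_zero (by exact_mod_cast hz.ne')]
    exact le_top
  · calc (x : ℝ≥0∞) / y = ((x : ℝ≥0∞) * w) / ((y : ℝ≥0∞) * w) :=
          (ENNReal.mul_div_mul_right _ _ (by exact_mod_cast hw.ne') (by simp)).symm
      _ ≤ ((z : ℝ≥0∞) * y) / ((y : ℝ≥0∞) * w) :=
          ENNReal.div_le_div (by exact_mod_cast h) le_rfl
      _ = ((z : ℝ≥0∞) * y) / ((w : ℝ≥0∞) * y) := by rw [mul_comm (y : ℝ≥0∞)]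
      _ = (z : ℝ≥0∞) / w :=
          ENNReal.mul_div_mul_right _ _ (by exact_mod_cast hy.ne') (by simp)

lemma gapEq (a b c d : ℕ) (hb : 0 < b) (hd : 0 < d) (hdet : c * b = a * d + 1) :
    (c : ℝ≥0∞) / d = (a : ℝ≥0∞) / b + 1 / ((b : ℝ≥0∞) * d) := by
  have hb0 : (b : ℝ≥0∞) ≠ 0 := by exact_mod_cast hb.ne'
  have hd0 : (d : ℝ≥0∞) ≠ 0 := by exact_mod_cast hd.ne'
  have : (c : ℝ≥0∞) / d = ((c : ℝ≥0∞) * b) / ((d : ℝ≥0∞) * b) :=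
    (ENNReal.mul_div_mul_right _ _ hb0 (by simp)).symm
  rw [this]
  have h1 : ((c : ℝ≥0∞) * b) = (a : ℝ≥0∞) * d + 1 := by
    exact_mod_cast congrArg (Nat.cast : ℕ → ℝ≥0∞) hdet
  rw [h1, ENNReal.add_div]
  congr 1
  · rw [mul_comm (d : ℝ≥0∞)]
    exact ENNReal.mul_div_mul_right _ _ hd0 (by simp)
  · rw [mul_comm (d : ℝ≥0∞)]

/-- Invariant of Stern-Brocot intervals: left denominator positive and determinant one. -/
def SBInv (M : (ℕ × ℕ) × (ℕ × ℕ)) : Prop :=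
  1 ≤ M.1.2 ∧ M.2.1 * M.1.2 = M.1.1 * M.2.2 + 1

lemma SBInv_sbGo (w : List Bool) : ∀ M, SBInv M → SBInv (sbGo M w) := by
  induction w with
  | nil => intro M h; exact h
  | cons p w ih =>
      rintro ⟨⟨a, b⟩, c, d⟩ ⟨h1, h2⟩
      simp only [SBInv] at h1 h2
      cases p <;> simp only [sbGo, if_true, if_false, Bool.false_eq_true, ite_false, ite_true]
      · exact ih _ ⟨by simp; omega, by simp at h2 ⊢; nlinarith⟩
      · exact ih _ ⟨by simpa using h1, by simp at h2 ⊢; nlinarith⟩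

lemma SBInv_sb (w : List Bool) : SBInv (sb w) := SBInv_sbGo w _ ⟨le_refl 1, by norm_num⟩

lemma child_sub (M : (ℕ × ℕ) × (ℕ × ℕ)) (hM : SBInv M) (p : Bool) :
    sbSetE (sbGo M [p]) ⊆ sbSetE M := by
  rcases M with ⟨⟨a, b⟩, c, d⟩
  obtain ⟨h1, h2⟩ := hM
  simp only [SBInv] at h1 h2
  have hc : 0 < c := by nlinarith
  cases p <;> simp only [sbGo, if_true, if_false, Bool.false_eq_true, ite_false, ite_true] <;>
    rw [sbSetE_def, sbSetE_def] <;> apply Set.Icc_subset_Icc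
  · exact divLe a b (a + c) (b + d) (by omega) (by right; simp; omega)
      (by nlinarith)
  · exact le_rfl
  · exact le_rfl
  · exact divLe (a + c) (b + d) c d (by simp; omega) (by left; exact hc) (by nlinarith)

lemma gPair_append (l1 l2 : List Bool) : ∀ p, gPair p (l1 ++ l2) = gPair (gPair p l1) l2 := by
  induction l1 with
  | nil => intro p; rfl
  | cons c l1 ih => rintro ⟨a, b⟩; simp [gPair, ih]

lemma gPair_ptw (ps : List Bool) : ∀ v : ℕ × ℕ,
    gPair ((v.1 : ℤ), (v.2 : ℤ)) (piecesToWord ps) = (((act ps v).1 : ℤ), ((act ps v).2 : ℤ)) := by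
  induction ps with
  | nil => intro v; rfl
  | cons p ps ih =>
      rintro ⟨a, b⟩
      cases p
      · show gPair _ (true :: false :: piecesToWord ps) = _
        simp only [gPair, if_true, Bool.false_eq_true, ite_false, ite_true]
        have h := ih (a + b, a)
        convert h using 2 <;> push_cast [act] <;> ring
      · show gPair _ (true :: piecesToWord ps) = _
        simp only [gPair, if_true, ite_true]
        have h := ih (b, a + b)
        convert h using 2 <;> push_cast [act] <;> ring

lemma gPair_pos (z : List Bool) : ∀ a b : ℤ, z.Chain' (fun x y => x = true ∨ y = true) →
    1 ≤ a → 1 ≤ b → (z.head? = some false → a < b) →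
    1 ≤ (gPair (a, b) z).1 ∧ 1 ≤ (gPair (a, b) z).2 := by
  induction z with
  | nil => intro a b _ ha hb _; exact ⟨ha, hb⟩
  | cons c z ih =>
      intro a b hch ha hb hhd
      have hch' : z.Chain' (fun x y => x = true ∨ y = true) := hch.tail
      cases c
      · have hab : a < b := hhd rfl
        simp only [gPair, Bool.false_eq_true, ite_false]
        refine ih b (b - a) hch' hb (by omega) ?_
        intro hz
        exfalso
        rcases List.isChain_cons.mp hch with ⟨h3, _⟩
        rcases h3 false hz with h | h <;> simp at h
      · simp only [gPair, ite_true]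
        refine ih b (b + a) hch' hb (by omega) (fun _ => by omega)

lemma ptw_chain (ps : List Bool) : (piecesToWord ps).Chain' (fun x y => x = true ∨ y = true) := by
  induction ps with
  | nil => exact List.isChain_nil
  | cons p ps ih =>
      cases p
      · exact List.isChain_cons.mpr ⟨fun y _ => Or.inl rfl,
          List.isChain_cons.mpr ⟨fun y hy => by
            cases ps with
            | nil => simp [piecesToWord] at hy
            | cons q ps => cases q <;> simp [piecesToWord] at hy <;> simp [hy]
            , ih⟩⟩
      · exact List.isChain_cons.mpr ⟨fun y _ => Or.inl rfl, ih⟩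

lemma ptw_head (ps : List Bool) (h : ps ≠ []) : (piecesToWord ps).head? = some true := by
  cases ps with
  | nil => simp at h
  | cons p ps => cases p <;> rfl

/-- every element of `Qset (piecesToWord ps)` has the form `(act ps (a,b)).2 / (act ps (a,b)).1`. -/
lemma Qsub (ps : List Bool) (x : ℝ≥0∞) (hx : x ∈ Qset (piecesToWord ps)) :
    ∃ a b : ℕ, 1 ≤ a ∧ 1 ≤ b ∧
      x = ((act ps (a, b)).2 : ℝ≥0∞) / ((act ps (a, b)).1 : ℝ≥0∞) := by
  obtain ⟨y, ⟨hhd, hch⟩, ⟨z, hz⟩, hq⟩ := hx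
  subst hz
  -- z is a path word or empty
  have hchz : z.Chain' (fun x y => x = true ∨ y = true) := (List.isChain_append.mp hch).1
  have hzhead : z.head? = some false → (1:ℤ) < 1 := by
    intro hzf
    cases z with
    | nil => simp at hzf
    | cons c z =>
        simp at hzf
        subst hzf
        simp at hhd
  obtain ⟨h1, h2⟩ := gPair_pos z 1 1 hchz le_rfl le_rfl hzhead
  set P := gPair (1, 1) z with hP
  have hPeq : P = ((P.1.toNat : ℤ), (P.2.toNat : ℤ)) := by
    rcases P with ⟨u, v⟩
    simp only [Prod.ext_iff]
    constructor <;> simp <;> omega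
  have hgy : gPair (1, 1) (z ++ piecesToWord ps)
      = (((act ps (P.1.toNat, P.2.toNat)).1 : ℤ), ((act ps (P.1.toNat, P.2.toNat)).2 : ℤ)) := by
    rw [gPair_append, ← hP, hPeq]
    exact gPair_ptw ps (P.1.toNat, P.2.toNat)
  refine ⟨P.1.toNat, P.2.toNat, by omega, by omega, ?_⟩
  rw [← hq]
  unfold qval
  rw [hgy]
  have hpos : 1 ≤ (act ps (P.1.toNat, P.2.toNat)).1 ∧ 1 ≤ (act ps (P.1.toNat, P.2.toNat)).2 :=
    act_pos ps _ _ (by omega) (by omega)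
  rw [show (((((act ps (P.1.toNat, P.2.toNat)).1 : ℤ), ((act ps (P.1.toNat, P.2.toNat)).2 : ℤ)) : ℤ × ℤ).2 : ℝ)
      = ((act ps (P.1.toNat, P.2.toNat)).2 : ℝ) by push_cast; rfl]
  rw [show (((((act ps (P.1.toNat, P.2.toNat)).1 : ℤ), ((act ps (P.1.toNat, P.2.toNat)).2 : ℤ)) : ℤ × ℤ).1 : ℝ)
      = ((act ps (P.1.toNat, P.2.toNat)).1 : ℝ) by push_cast; rfl]
  rw [ENNReal.ofReal_div_of_pos (by exact_mod_cast hpos.1), ENNReal.ofReal_natCast,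
    ENNReal.ofReal_natCast]

lemma Qne (ps : List Bool) : (Qset (piecesToWord ps)).Nonempty := by
  refine ⟨qval (true :: piecesToWord ps), true :: piecesToWord ps, ⟨rfl, ?_⟩,
    ⟨[true], rfl⟩, rfl⟩
  exact List.isChain_cons.mpr ⟨fun y _ => Or.inl rfl, ptw_chain ps⟩

lemma Qanti {s1 s2 : List Bool} (h : s1 <:+ s2) : Qset s2 ⊆ Qset s1 := by
  rintro x ⟨y, hy, hs, hq⟩
  exact ⟨y, hy, h.trans hs, hq⟩

lemma Qbound (ps : List Bool) : Qset (piecesToWord ps) ⊆ sbSetE (sb (W ps)) := by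
  intro x hx
  obtain ⟨a, b, ha, hb, hx⟩ := Qsub ps x hx
  subst hx
  have hlin := act_linear ps a b
  have hdet := act_det ps
  have hpos := act_pos ps a b ha hb
  rw [sbW]
  set P := (act ps (1,0)).1 with hP
  set Q := (act ps (1,0)).2 with hQ
  set R := (act ps (0,1)).1 with hR
  set S := (act ps (0,1)).2 with hS
  have h1 : (act ps (a,b)).1 = a * P + b * R := by rw [hlin]
  have h2 : (act ps (a,b)).2 = a * Q + b * S := by rw [hlin]
  have hden : 0 < a * P + b * R := by rw [← h1]; exact hpos.1
  rw [h1, h2]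
  by_cases hev : Even ps.length
  · rw [if_pos hev] at hdet ⊢
    simp only [sbSetE_def, Set.mem_Icc]
    constructor
    · exact divLe Q P (a*Q+b*S) (a*P+b*R) (by nlinarith) (Or.inr hden) (by nlinarith)
    · exact divLe (a*Q+b*S) (a*P+b*R) S R hden (Or.inl (by nlinarith)) (by nlinarith)
  · rw [if_neg hev] at hdet ⊢
    simp only [sbSetE_def, Set.mem_Icc]
    constructor
    · exact divLe S R (a*Q+b*S) (a*P+b*R) (by nlinarith) (Or.inr hden) (by nlinarith)
    · exact divLe (a*Q+b*S) (a*P+b*R) Q P hden (Or.inl (by nlinarith)) (by nlinarith)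

lemma exists_next (t : ℝ≥0∞) (l : List Bool) (h : t ∈ sbSetE (sb (W l))) :
    ∃ p : Bool, t ∈ sbSetE (sb (W (p :: l))) := by
  have hmain : ∀ q : Bool, ∃ p : Bool, (if Even l.length then !p else p) = q := by
    intro q; by_cases hev : Even l.length
    · exact ⟨!q, by simp [hev]⟩
    · exact ⟨q, by simp [hev]⟩
  rcases hsb : sb (W l) with ⟨⟨a, b⟩, c, d⟩
  rw [hsb, sbSetE_def] at h
  simp only [Set.mem_Icc] at h
  rcases le_total t (((a + c : ℕ) : ℝ≥0∞) / ((b + d : ℕ) : ℝ≥0∞)) with hle | hle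
  · obtain ⟨p, hp⟩ := hmain true
    refine ⟨p, ?_⟩
    rw [sb_cons, hsb, hp]
    simp only [sbGo, ite_true]
    simp only [sbSetE_def, Set.mem_Icc]
    exact ⟨h.1, by exact_mod_cast hle⟩
  · obtain ⟨p, hp⟩ := hmain false
    refine ⟨p, ?_⟩
    rw [sb_cons, hsb, hp]
    simp only [sbGo, Bool.false_eq_true, ite_false]
    simp only [sbSetE_def, Set.mem_Icc]
    exact ⟨by exact_mod_cast hle, h.2⟩

lemma nested_unique' (a b c d : ℕ → ℕ)
    (hb : ∀ n, 1 ≤ b n)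
    (hdet : ∀ n, c n * b n = a n * d n + 1)
    (hstep : ∀ n, (a (n+1) = a n ∧ b (n+1) = b n ∧ c (n+1) = a n + c n ∧ d (n+1) = b n + d n)
      ∨ (a (n+1) = a n + c n ∧ b (n+1) = b n + d n ∧ c (n+1) = c n ∧ d (n+1) = d n))
    {t t' : ℝ≥0∞}
    (ht : ∀ n, (a n : ℝ≥0∞) / b n ≤ t ∧ t ≤ (c n : ℝ≥0∞) / d n)
    (ht' : ∀ n, (a n : ℝ≥0∞) / b n ≤ t' ∧ t' ≤ (c n : ℝ≥0∞) / d n) : t = t' := by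
  by_cases hA : ∀ n, d n = 0
  · -- the all-right branch `[a n, ∞]`
    have hb1 : ∀ n, b n = 1 := by
      intro n
      have h := hdet n
      rw [hA n] at h
      simp at h
      exact h.2
    have hc1 : ∀ n, c n = 1 := by
      intro n
      have h := hdet n
      rw [hA n] at h
      simp at h
      exact h.1
    have hstepA : ∀ n, a (n+1) = a n + 1 := by
      intro n
      rcases hstep n with h | h
      · exfalso
        have := hA (n+1)
        have := hb n
        omega
      · rw [h.1, hc1 n]
    have hgrow : ∀ n, n ≤ a n := by
      intro n
      induction n with
      | zero => omega
      | succ k ih => rw [hstepA k]; omega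
    have htop : ∀ x : ℝ≥0∞, (∀ n, (a n : ℝ≥0∞) / b n ≤ x) → x = ⊤ := by
      intro x hx
      by_contra hx'
      obtain ⟨k, hk⟩ := ENNReal.exists_nat_gt hx'
      have h1 := hx k
      rw [hb1 k] at h1
      simp only [Nat.cast_one, div_one] at h1
      have h2 : (k : ℝ≥0∞) ≤ (a k : ℝ≥0∞) := by exact_mod_cast hgrow k
      exact absurd ((h2.trans h1).trans_lt hk) (lt_irrefl _)
    rw [htop t (fun n => (ht n).1), htop t' (fun n => (ht' n).1)]
  · push_neg at hA
    obtain ⟨n₀, hn₀⟩ := hA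
    have hdmono : Monotone d := monotone_nat_of_le_succ (fun n => by rcases hstep n with h | h <;> omega)
    have hd : ∀ k, 1 ≤ d (n₀ + k) := fun k =>
      le_trans (by omega) (hdmono (Nat.le_add_right n₀ k))
    have hP : ∀ k, k + 1 ≤ b (n₀ + k) * d (n₀ + k) := by
      intro k
      induction k with
      | zero =>
          have h1 := hb n₀
          have h2 := hd 0
          calc 0 + 1 = 1 * 1 := by norm_num
            _ ≤ b (n₀ + 0) * d (n₀ + 0) := Nat.mul_le_mul (hb _) h2
      | succ k ih =>
          have h1 := hb (n₀ + k)
          have h2 := hd k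
          rcases hstep (n₀ + k) with h | h <;>
            · obtain ⟨e1, e2, e3, e4⟩ := h
              rw [show n₀ + (k+1) = (n₀ + k) + 1 from rfl, e2, e4]
              nlinarith
    have key : ∀ x y : ℝ≥0∞, (∀ n, x ≤ (c n : ℝ≥0∞) / d n) → (∀ n, (a n : ℝ≥0∞) / b n ≤ y) →
        x ≤ y := by
      intro x y hx hy
      apply ENNReal.le_of_forall_pos_le_add
      intro ε hε _
      obtain ⟨k, hk⟩ := ENNReal.exists_inv_nat_lt
        (show ((ε : ℝ≥0∞)) ≠ 0 by exact_mod_cast hε.ne')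
      have hgap : (c (n₀+k) : ℝ≥0∞) / d (n₀+k)
          = (a (n₀+k) : ℝ≥0∞) / b (n₀+k) + 1 / ((b (n₀+k) : ℝ≥0∞) * d (n₀+k)) :=
        gapEq _ _ _ _ (hb _) (hd k) (hdet _)
      have h1 : (1:ℝ≥0∞) / ((b (n₀+k) : ℝ≥0∞) * d (n₀+k)) ≤ (k : ℝ≥0∞)⁻¹ := by
        rw [one_div]
        apply ENNReal.inv_le_inv.mpr
        calc (k : ℝ≥0∞) ≤ ((b (n₀+k) * d (n₀+k) : ℕ) : ℝ≥0∞) := by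
              exact_mod_cast Nat.le_of_lt (by have := hP k; omega)
          _ = (b (n₀+k) : ℝ≥0∞) * d (n₀+k) := by push_cast; rfl
      calc x ≤ (c (n₀+k) : ℝ≥0∞) / d (n₀+k) := hx _
        _ = (a (n₀+k) : ℝ≥0∞) / b (n₀+k) + 1 / ((b (n₀+k) : ℝ≥0∞) * d (n₀+k)) := hgap
        _ ≤ y + (k : ℝ≥0∞)⁻¹ := add_le_add (hy _) h1
        _ ≤ y + ε := add_le_add_right hk.le y
    exact le_antisymm (key t t' (fun n => (ht n).2) (fun n => (ht' n).1))
      (key t' t (fun n => (ht' n).2) (fun n => (ht n).1))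

lemma mainC (ps : List Bool) : closure (Qset (piecesToWord ps)) = sbSetE (sb (W ps)) := by
  apply subset_antisymm
  · apply closure_minimal (Qbound ps)
    rw [sbSetE_def]; exact isClosed_Icc
  · intro t ht
    rw [mem_closure_iff]
    intro o ho hto
    have hnext : ∀ l : List Bool, t ∈ sbSetE (sb (W l)) →
        ∃ p : Bool, t ∈ sbSetE (sb (W (p :: l))) := exists_next t
    let T := {l : List Bool // t ∈ sbSetE (sb (W l))}
    let E : ℕ → T := fun n => Nat.rec (motive := fun _ => T) ⟨ps, ht⟩
      (fun _ ih => ⟨(hnext ih.1 ih.2).choose :: ih.1, (hnext ih.1 ih.2).choose_spec⟩) n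
    have hEsucc : ∀ n, (E (n+1)).1 = (hnext (E n).1 (E n).2).choose :: (E n).1 := fun n => rfl
    have hstep : ∀ n, ∃ p : Bool, sb (W ((E (n+1)).1)) = sbGo (sb (W ((E n).1))) [p] := by
      intro n
      exact ⟨if Even ((E n).1).length then !(hnext (E n).1 (E n).2).choose
        else (hnext (E n).1 (E n).2).choose, by rw [hEsucc n, sb_cons]⟩
    have hmem : ∀ n, t ∈ sbSetE (sb (W ((E n).1))) := fun n => (E n).2
    have hQsub : ∀ n, Qset (piecesToWord ((E n).1)) ⊆ Qset (piecesToWord ps) := by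
      intro n
      induction n with
      | zero => exact subset_rfl
      | succ k ih =>
          refine subset_trans ?_ ih
          apply Qanti
          rw [hEsucc k]
          cases (hnext (E k).1 (E k).2).choose
          · exact ⟨[true, false], rfl⟩
          · exact ⟨[true], rfl⟩
    by_cases hcap : ∀ n, (sbSetE (sb (W ((E n).1))) ∩ oᶜ).Nonempty
    · exfalso
      have hclosed : ∀ n, IsClosed (sbSetE (sb (W ((E n).1))) ∩ oᶜ) := fun n => by
        rw [sbSetE_def]; exact isClosed_Icc.inter (isClosed_compl_iff.mpr ho)
      have hanti : ∀ n, sbSetE (sb (W ((E (n+1)).1))) ∩ oᶜ ⊆ sbSetE (sb (W ((E n).1))) ∩ oᶜ := by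
        intro n
        apply Set.inter_subset_inter_left
        obtain ⟨p, hp⟩ := hstep n
        rw [hp]
        exact child_sub _ (SBInv_sb _) p
      obtain ⟨x, hx⟩ := IsCompact.nonempty_iInter_of_sequence_nonempty_isCompact_isClosed _ hanti hcap
        ((hclosed 0).isCompact) hclosed
      have hxall : ∀ n, x ∈ sbSetE (sb (W ((E n).1))) := fun n => (Set.mem_iInter.mp hx n).1
      have hxo : x ∈ oᶜ := (Set.mem_iInter.mp hx 0).2
      have hstep' : ∀ n,
          ((sb (W ((E (n+1)).1))).1.1 = (sb (W ((E n).1))).1.1 ∧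
           (sb (W ((E (n+1)).1))).1.2 = (sb (W ((E n).1))).1.2 ∧
           (sb (W ((E (n+1)).1))).2.1 = (sb (W ((E n).1))).1.1 + (sb (W ((E n).1))).2.1 ∧
           (sb (W ((E (n+1)).1))).2.2 = (sb (W ((E n).1))).1.2 + (sb (W ((E n).1))).2.2)
          ∨
          ((sb (W ((E (n+1)).1))).1.1 = (sb (W ((E n).1))).1.1 + (sb (W ((E n).1))).2.1 ∧
           (sb (W ((E (n+1)).1))).1.2 = (sb (W ((E n).1))).1.2 + (sb (W ((E n).1))).2.2 ∧
           (sb (W ((E (n+1)).1))).2.1 = (sb (W ((E n).1))).2.1 ∧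
           (sb (W ((E (n+1)).1))).2.2 = (sb (W ((E n).1))).2.2) := by
        intro n
        obtain ⟨p, hp⟩ := hstep n
        rcases hJ : sb (W ((E n).1)) with ⟨⟨A, B⟩, C, D⟩
        rw [hJ] at hp
        cases p
        · right; rw [hp]; simp [sbGo]
        · left; rw [hp]; simp [sbGo]
      have hmem' : ∀ (y : ℝ≥0∞), (∀ n, y ∈ sbSetE (sb (W ((E n).1)))) → ∀ n,
          ((sb (W ((E n).1))).1.1 : ℝ≥0∞) / ((sb (W ((E n).1))).1.2) ≤ y ∧
          y ≤ ((sb (W ((E n).1))).2.1 : ℝ≥0∞) / ((sb (W ((E n).1))).2.2) := by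
        intro y hy n
        have := hy n
        rw [sbSetE_def, Set.mem_Icc] at this
        exact this
      have hxt : x = t :=
        nested_unique' (fun n => (sb (W ((E n).1))).1.1) (fun n => (sb (W ((E n).1))).1.2)
          (fun n => (sb (W ((E n).1))).2.1) (fun n => (sb (W ((E n).1))).2.2)
          (fun n => (SBInv_sb _).1) (fun n => (SBInv_sb _).2) hstep'
          (hmem' x hxall) (hmem' t hmem)
      exact hxo (hxt ▸ hto)
    · push_neg at hcap
      obtain ⟨n, hn⟩ := hcap
      obtain ⟨q, hq⟩ := Qne ((E n).1)
      have hq1 : q ∈ sbSetE (sb (W ((E n).1))) := Qbound _ hq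
      have hq2 : q ∈ o := by
        by_contra hq2
        exact absurd (Set.eq_empty_iff_forall_notMem.mp hn q ⟨hq1, hq2⟩) (fun h => h)
      exact ⟨q, hq2, hQsub n hq⟩

/-- For a word `s` which is a concatenation of `r` pieces (each piece `R` = `true` or
`RL` = `false`), the closure of `Q_s` in `[0,∞]` is a Stern-Brocot interval of rank `r`;
moreover if `r` is even then the closure of `Q_{RLs}` is its left sub-interval of rank `r+1` and
the closure of `Q_{Rs}` is its right sub-interval, while if `r` is odd the roles of left and
right are exchanged. -/
theorem closure_Qset_eq_sternBrocot (ps : List Bool) :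
    ∃ w : List Bool, w.length = ps.length ∧
      closure (Qset (piecesToWord ps)) = sbSetE (sb w) ∧
      closure (Qset (piecesToWord (false :: ps))) =
        sbSetE (sb (w ++ [if Even ps.length then true else false])) ∧
      closure (Qset (piecesToWord (true :: ps))) =
        sbSetE (sb (w ++ [if Even ps.length then false else true])) := by
  refine ⟨W ps, W_length ps, mainC ps, ?_, ?_⟩
  · rw [mainC (false :: ps),
      show W (false :: ps) = W ps ++ [if Even ps.length then true else false] from by
        by_cases h : Even ps.length <;> simp [W, h]]
  · rw [mainC (true :: ps),
      show W (true :: ps) = W ps ++ [if Even ps.length then false else true] from by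
        by_cases h : Even ps.length <;> simp [W, h]]
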